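/- Let G be a group and σ, τ : G → G group endomorphisms such that G is (σ,τ)-abelian, i.e. σ(v)·u = u·τ(v) for all u, v ∈ G. Then every (σ,τ)-derivation D of ℂ[G] is a combination of (σ,τ)-central derivations; concretely, for every a ∈ G the coefficient map φ_a : G → ℂ defined by φ_a(g) = D(g)(σ(g)·a) is a group homomorphism from G to the additive group (ℂ, +). -/

import Mathlib

/-! The twisted Leibniz rule gives `D(g₁g₂) = D(g₁)·τ(g₂) + σ(g₁)·D(g₂)`. Multiplying by a basis
element only shifts coefficients: the coefficient of `D(g₁)·τ(g₂)` at `σ(g₁g₂)a` is that of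
`D(g₁)` at `σ(g₁)·(σ(g₂)·a·τ(g₂)⁻¹)`, and `σ(g₂)·a·τ(g₂)⁻¹ = a` is exactly `(σ,τ)`-abelianness;
the coefficient of `σ(g₁)·D(g₂)` at `σ(g₁g₂)a` is that of `D(g₂)` at `σ(g₂)a`. -/

/-- Extension of a group endomorphism to a ℂ-algebra endomorphism of `ℂ[G]`. -/
noncomputable def algExt {G : Type*} [Group G] (σ : G →* G) :
    MonoidAlgebra ℂ G →ₐ[ℂ] MonoidAlgebra ℂ G :=
  MonoidAlgebra.mapDomainAlgHom ℂ ℂ σ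

open MonoidAlgebra

lemma algExt_of {G : Type*} [Group G] (σ : G →* G) (g : G) :
    algExt σ (of ℂ G g) = single (σ g) 1 := by
  simp [algExt, of_apply, mapDomainAlgHom, mapDomain_single]

lemma map_of_mul_of_twisted_leibniz {G : Type*} [Group G] {σ τ : G →* G}
    {D : MonoidAlgebra ℂ G →ₗ[ℂ] MonoidAlgebra ℂ G}
    (hD : ∀ a b : MonoidAlgebra ℂ G, D (a * b) = D a * algExt τ b + algExt σ a * D b)
    (g₁ g₂ : G) :
    D (of ℂ G (g₁ * g₂)) = D (of ℂ G g₁) * single (τ g₂) 1 + single (σ g₁) 1 * D (of ℂ G g₂) := by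
  rw [map_mul, hD, algExt_of, algExt_of]

lemma mul_mul_inv_eq_of_twisted_comm {G : Type*} [Group G] {σ τ : G →* G}
    (hab : ∀ u v : G, σ v * u = u * τ v) (u v : G) :
    σ v * u * (τ v)⁻¹ = u := by
  rw [hab, mul_inv_cancel_right]

/-- if `G` is `(σ,τ)`-abelian (`σ(v)·u = u·τ(v)` for all `u, v`), then for
every `(σ,τ)`-derivation `D` of `ℂ[G]` and every `a ∈ G`, the coefficient map
`φ_a(g) = D(g)(σ(g)·a)` is a group homomorphism `G → (ℂ,+)`; i.e. `D` is a combination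
of `(σ,τ)`-central derivations. -/
theorem sigma_tau_abelian_derivations_are_central
    {G : Type*} [Group G] (σ τ : G →* G)
    (hab : ∀ u v : G, σ v * u = u * τ v)
    (D : MonoidAlgebra ℂ G →ₗ[ℂ] MonoidAlgebra ℂ G)
    (hD : ∀ a b : MonoidAlgebra ℂ G, D (a * b) = D a * algExt τ b + algExt σ a * D b) :
    ∀ a g₁ g₂ : G,
      (D (MonoidAlgebra.of ℂ G (g₁ * g₂))).coeff (σ (g₁ * g₂) * a)
        = (D (MonoidAlgebra.of ℂ G g₁)).coeff (σ g₁ * a)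
          + (D (MonoidAlgebra.of ℂ G g₂)).coeff (σ g₂ * a) := by
  intro a g₁ g₂
  have shift_right : σ (g₁ * g₂) * a * (τ g₂)⁻¹ = σ g₁ * a := by
    rw [σ.map_mul, mul_assoc, mul_assoc, ← mul_assoc _ a, mul_mul_inv_eq_of_twisted_comm hab]
  rw [map_of_mul_of_twisted_leibniz hD, coeff_add, Finsupp.add_apply, coeff_mul_single_apply,
    coeff_single_mul_apply, mul_one, one_mul, shift_right, σ.map_mul, mul_assoc, inv_mul_cancel_left]
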